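/- arXiv:1709.07635 — 6 statements merged into one kernel-verified Lean document; each statement's English description precedes it below -/
import Mathlib

section
/- Let n ∈ ℕ and ε₁,...,ε₅ > 0. Let G ⊆ {-1,1}^n and E ⊆ G with Pr_{z uniform}[z ∈ E] ≥ 1 - ε₁. Let T be a distribution over functions T : {-1,1}^n → {-1,1} such that for every z ∈ E, Pr_{T∼𝐓}[T(z) = -1] ≥ 1 - ε₂, and for every z ∉ G, Pr_{T∼𝐓}[T(z) = 1] ≥ 1 - ε₃. Let z be a distribution over {-1,1}^n such that the probability over T∼𝐓 that |Pr[T(u)=-1] - Pr[T(z)=-1]| > ε₅ is at most ε₄. Then Pr[z ∈ G] ≥ 1 - (ε₁ + ε₂ + ε₃ + 2ε₄ + ε₅). -/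
/-! Let `acc z` be the probability that a random test accepts `z`. Averaging `acc` over the
uniform distribution gives at least `1 - ε₁ - ε₂`, because `acc ≥ 1 - ε₂` on `E`. Exchanging
the order of summation, the same average is `𝔼_T Pr_u[T accepts]`, which exceeds
`𝔼_T Pr_Z[T accepts] = 𝔼_Z acc` by at most `ε₄ + ε₅`, since a test is either fooled up to
`ε₅` or one of the `ε₄`-rare bad ones. Finally `acc ≤ 1_G + ε₃` pointwise, so
`𝔼_Z acc ≤ Pr[Z ∈ G] + ε₃`. -/

open Finset
open scoped Classical

noncomputable section

/-- The probability that a sample from the distribution `p` satisfies `P`. -/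
noncomputable def pr {α : Type*} [Fintype α] (p : PMF α) (P : α → Prop) : ℝ :=
  ∑ x, if P x then (p x).toReal else 0

/-- The uniform distribution over `{-1,1}^n`. -/
noncomputable def unif (n : ℕ) : PMF (Fin n → Bool) := PMF.uniformOfFintype _

namespace PMF

variable {α β : Type*} [Fintype α] [Fintype β]

def expect (p : PMF α) (f : α → ℝ) : ℝ :=
  ∑ x, (p x).toReal * f x

theorem sum_toReal (p : PMF α) : ∑ x, (p x).toReal = 1 := by
  have h := p.tsum_coe
  rw [tsum_fintype] at h
  rw [← ENNReal.toReal_sum fun x _ => p.apply_ne_top x, h, ENNReal.toReal_one]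

theorem expect_mono (p : PMF α) {f g : α → ℝ} (h : ∀ x, f x ≤ g x) :
    p.expect f ≤ p.expect g :=
  sum_le_sum fun x _ => mul_le_mul_of_nonneg_left (h x) ENNReal.toReal_nonneg

theorem expect_add_const (p : PMF α) (f : α → ℝ) (c : ℝ) :
    p.expect (fun x => f x + c) = p.expect f + c := by
  simp only [expect, mul_add, sum_add_distrib, ← sum_mul, sum_toReal, one_mul]

theorem expect_sub (p : PMF α) (f g : α → ℝ) :
    p.expect (fun x => f x - g x) = p.expect f - p.expect g := by
  simp only [expect, mul_sub, sum_sub_distrib]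

theorem expect_indicator (p : PMF α) (P : α → Prop) :
    p.expect (fun x => if P x then 1 else 0) = pr p P := by
  simp only [expect, pr, mul_ite, mul_one, mul_zero]

theorem expect_le_pr_add {p : PMF α} {f : α → ℝ} {P : α → Prop} {c : ℝ}
    (h : ∀ x, f x ≤ (if P x then 1 else 0) + c) : p.expect f ≤ pr p P + c := by
  simpa only [expect_add_const, expect_indicator] using p.expect_mono h

theorem pr_sub_le_expect {p : PMF α} {f : α → ℝ} {P : α → Prop} {c : ℝ}
    (h : ∀ x, (if P x then 1 else 0) - c ≤ f x) : pr p P - c ≤ p.expect f := by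
  simpa only [sub_eq_add_neg, expect_add_const, expect_indicator] using p.expect_mono h

theorem expect_pr_comm (p : PMF α) (q : PMF β) (P : β → α → Prop) :
    q.expect (fun b => pr p (P b)) = p.expect (fun a => pr q (fun b => P b a)) := by
  simp only [expect, pr, mul_ite, mul_zero, mul_sum]
  rw [sum_comm]
  exact sum_congr rfl fun a _ => sum_congr rfl fun b _ => by split_ifs <;> ring

end PMF

section Pr

variable {α : Type*} [Fintype α]

theorem pr_nonneg (p : PMF α) (P : α → Prop) : 0 ≤ pr p P :=
  sum_nonneg fun x _ => by split_ifs <;> simp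

theorem pr_le_one (p : PMF α) (P : α → Prop) : pr p P ≤ 1 :=
  p.sum_toReal ▸ sum_le_sum fun x _ => by split_ifs <;> simp

theorem pr_not (p : PMF α) (P : α → Prop) : pr p (fun x => ¬P x) = 1 - pr p P := by
  rw [← p.sum_toReal, pr, pr, eq_sub_iff_add_eq, ← sum_add_distrib]
  exact sum_congr rfl fun x _ => by by_cases h : P x <;> simp [h]

end Pr

theorem randomized_tests_general
    (n : ℕ) (ε₁ ε₂ ε₃ ε₄ ε₅ : ℝ)
    (hε₂ : 0 < ε₂) (hε₃ : 0 < ε₃) (hε₅ : 0 < ε₅)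
    (G E : Set (Fin n → Bool))
    (hE : 1 - ε₁ ≤ pr (unif n) (fun z => z ∈ E))
    (T : PMF ((Fin n → Bool) → Bool))
    (hTacc : ∀ z ∈ E, 1 - ε₂ ≤ pr T (fun t => t z = true))
    (hTrej : ∀ z ∉ G, 1 - ε₃ ≤ pr T (fun t => t z = false))
    (Z : PMF (Fin n → Bool))
    (hfool : pr T (fun t =>
        ε₅ < |pr (unif n) (fun x => t x = true) - pr Z (fun x => t x = true)|) ≤ ε₄) :
    1 - (ε₁ + ε₂ + ε₃ + 2 * ε₄ + ε₅) ≤ pr Z (fun z => z ∈ G) := by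
  set acc : (Fin n → Bool) → ℝ := fun z => pr T (fun t => t z = true)
  have hunif : 1 - ε₁ - ε₂ ≤ (unif n).expect acc := by
    refine (sub_le_sub_right hE ε₂).trans (PMF.pr_sub_le_expect fun z => ?_)
    by_cases hz : z ∈ E
    · simpa [hz] using hTacc z hz
    · simpa [hz] using (pr_nonneg T _).trans' (neg_nonpos.mpr hε₂.le)
  have hZ : Z.expect acc ≤ pr Z (· ∈ G) + ε₃ := by
    refine PMF.expect_le_pr_add fun z => ?_
    by_cases hz : z ∈ G
    · simpa [hz] using (pr_le_one T _).trans (le_add_of_nonneg_right hε₃.le)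
    · have hrej := pr_not T (fun t => t z = true)
      simp only [Bool.not_eq_true] at hrej
      simp only [hz, if_false, zero_add]
      linarith [hTrej z hz]
  have hfooled : T.expect (fun t => pr (unif n) (t · = true))
      ≤ T.expect (fun t => pr Z (t · = true)) + (ε₄ + ε₅) := by
    rw [← sub_le_iff_le_add', ← PMF.expect_sub]
    refine (PMF.expect_le_pr_add fun t => ?_).trans (add_le_add_left hfool ε₅)
    split_ifs with hbad
    · linarith [pr_le_one (unif n) (t · = true), pr_nonneg Z (t · = true)]
    · linarith [le_abs_self (pr (unif n) (t · = true) - pr Z (t · = true)), not_lt.mp hbad]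
  rw [PMF.expect_pr_comm (unif n) T (fun t x => t x = true),
    PMF.expect_pr_comm Z T (fun t x => t x = true)] at hfooled
  linarith [(pr_nonneg T _).trans hfool]

/-- The "randomized tests" lemma. A test `T : {-1,1}^n → {-1,1}` is modeled as a
Boolean-valued function where the output `true` corresponds to `-1` (acceptance).
If `E ⊆ G ⊆ {-1,1}^n` with `Pr_{uniform}[z ∈ E] ≥ 1 - ε₁`, a random test `T ∼ 𝐓`
accepts every fixed `z ∈ E` with probability at least `1 - ε₂` and rejects every
fixed `z ∉ G` with probability at least `1 - ε₃`, and a distribution `Z` is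
`ε₅`-pseudorandom for all but an `ε₄`-fraction (under `𝐓`) of the tests, then
`Pr[Z ∈ G] ≥ 1 - (ε₁ + ε₂ + ε₃ + 2ε₄ + ε₅)`. -/
theorem randomized_tests
    (n : ℕ) (ε₁ ε₂ ε₃ ε₄ ε₅ : ℝ)
    (hε₁ : 0 < ε₁) (hε₂ : 0 < ε₂) (hε₃ : 0 < ε₃) (hε₄ : 0 < ε₄) (hε₅ : 0 < ε₅)
    (G E : Set (Fin n → Bool)) (hEG : E ⊆ G)
    (hE : 1 - ε₁ ≤ pr (unif n) (fun z => z ∈ E))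
    (T : PMF ((Fin n → Bool) → Bool))
    (hTacc : ∀ z ∈ E, 1 - ε₂ ≤ pr T (fun t => t z = true))
    (hTrej : ∀ z ∉ G, 1 - ε₃ ≤ pr T (fun t => t z = false))
    (Z : PMF (Fin n → Bool))
    (hfool : pr T (fun t =>
        ε₅ < |pr (unif n) (fun x => t x = true) - pr Z (fun x => t x = true)|) ≤ ε₄) :
    1 - (ε₁ + ε₂ + ε₃ + 2 * ε₄ + ε₅) ≤ pr Z (fun z => z ∈ G) :=
  randomized_tests_general n ε₁ ε₂ ε₃ ε₄ ε₅ hε₂ hε₃ hε₅ G E hE T hTacc hTrej Z hfool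
end
end

section
/- Let f : {0,1}^n × {0,1}^t → {0,1}^m be an averaging sampler with accuracy ε and error δ. Then f is an (n - log(ε/δ), 2ε)-extractor. -/
/-!
Write `p x = Pr_z[f(x,z) ∈ T]` and `μ = |T|/2^m`. The bias of `f(X,U_t)` on `T` is
`|∑ₓ X(x) (p x - μ)| ≤ ∑ₓ X(x) |p x - μ|`. On the sampler's good inputs `|p x - μ| ≤ ε`,
contributing at most `ε`; there are at most `δ 2^n` bad inputs, each of mass at most
`(ε/δ) 2^{-n}` and with `|p x - μ| ≤ 1`, contributing at most `ε` as well.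
-/

open Finset
open scoped Classical

lemma PMF.sum_toReal_eq_one {α : Type*} [Fintype α] (X : PMF α) : ∑ a, (X a).toReal = 1 := by
  rw [← ENNReal.toReal_sum fun a _ => X.apply_ne_top a, ← ENNReal.toReal_one, ← X.tsum_coe,
    tsum_fintype]

lemma card_div_two_pow_le_one {k : ℕ} (s : Finset (Fin k → Bool)) : (#s : ℝ) / 2 ^ k ≤ 1 := by
  rw [div_le_one (by positivity)]
  exact_mod_cast (card_le_univ s).trans_eq (by simp)

lemma abs_sub_le_one_of_nonneg_of_le_one {a b : ℝ} (ha₀ : 0 ≤ a) (ha₁ : a ≤ 1) (hb₀ : 0 ≤ b)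
    (hb₁ : b ≤ 1) : |a - b| ≤ 1 :=
  abs_sub_le_iff.2 ⟨by linarith, by linarith⟩

lemma abs_sum_mul_le_add_sum_filter {α : Type*} [Fintype α] (w g : α → ℝ)
    (hw : ∀ a, 0 ≤ w a) (hw₁ : ∑ a, w a = 1) (hg : ∀ a, |g a| ≤ 1) {ε : ℝ} (hε : 0 ≤ ε) :
    |∑ a, w a * g a| ≤ ε + ∑ a ∈ univ.filter (fun a => ¬ |g a| ≤ ε), w a := by
  have hgood : ∑ a ∈ univ.filter (fun a => |g a| ≤ ε), w a * |g a| ≤ ε :=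
    calc ∑ a ∈ univ.filter (fun a => |g a| ≤ ε), w a * |g a|
        ≤ ∑ a ∈ univ.filter (fun a => |g a| ≤ ε), w a * ε :=
          sum_le_sum fun a ha => mul_le_mul_of_nonneg_left (mem_filter.1 ha).2 (hw a)
      _ ≤ (∑ a, w a) * ε := by
          rw [← sum_mul]
          exact mul_le_mul_of_nonneg_right
            (sum_le_sum_of_subset_of_nonneg (filter_subset _ _) fun a _ _ => hw a) hε
      _ = ε := by rw [hw₁, one_mul]
  have hbad : ∑ a ∈ univ.filter (fun a => ¬ |g a| ≤ ε), w a * |g a|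
      ≤ ∑ a ∈ univ.filter (fun a => ¬ |g a| ≤ ε), w a :=
    sum_le_sum fun a _ => mul_le_of_le_one_right (hw a) (hg a)
  calc |∑ a, w a * g a| ≤ ∑ a, w a * |g a| := by
        refine (abs_sum_le_sum_abs _ _).trans_eq (sum_congr rfl fun a _ => ?_)
        rw [abs_mul, abs_of_nonneg (hw a)]
    _ ≤ ε + ∑ a ∈ univ.filter (fun a => ¬ |g a| ≤ ε), w a := by
        rw [← sum_filter_add_sum_filter_not univ fun a => |g a| ≤ ε]
        linarith

section Sampler

variable {n t m : ℕ} (f : (Fin n → Bool) → (Fin t → Bool) → (Fin m → Bool))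
  (T : Finset (Fin m → Bool))

/-- The estimate `Pr_z[f(x,z) ∈ T]` of the density of `T` computed by the sampler from `x`. -/
noncomputable def hitFraction (x : Fin n → Bool) : ℝ :=
  (#(univ.filter fun z => f x z ∈ T) : ℝ) / 2 ^ t

lemma hitFraction_nonneg (x : Fin n → Bool) : 0 ≤ hitFraction f T x := by
  unfold hitFraction; positivity

lemma hitFraction_le_one (x : Fin n → Bool) : hitFraction f T x ≤ 1 :=
  card_div_two_pow_le_one _

lemma sum_mul_ite_div_eq_mul_hitFraction (c : ℝ) (x : Fin n → Bool) :
    ∑ z : Fin t → Bool, c * (if f x z ∈ T then (1 : ℝ) else 0) / 2 ^ t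
      = c * hitFraction f T x := by
  rw [← sum_div, ← mul_sum, sum_boole, hitFraction, mul_div_assoc]

end Sampler

/-- If `f : {0,1}^n × {0,1}^t → {0,1}^m` is an averaging sampler with accuracy `ε`
and error `δ` (for every `T ⊆ {0,1}^m`, at most a `δ`-fraction of the `x`'s have
empirical estimate `Pr_z[f(x,z) ∈ T]` deviating from `|T|/2^m` by more than `ε`),
then `f` is an `(n - log(ε/δ), 2ε)`-extractor: for every source `X` with
min-entropy at least `n - log₂(ε/δ)` — i.e. `X x ≤ (ε/δ)·2^{-n}` pointwise — the
distribution `f(X,U_t)` is `2ε`-close to uniform in statistical distance. -/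
theorem averaging_sampler_implies_extractor
    (n t m : ℕ) (ε δ : ℝ) (hε : 0 < ε) (hδ : 0 < δ)
    (f : (Fin n → Bool) → (Fin t → Bool) → (Fin m → Bool))
    (hsamp : ∀ T : Finset (Fin m → Bool),
      ((((univ : Finset (Fin n → Bool))).filter (fun x =>
          ¬ |(((univ : Finset (Fin t → Bool)).filter (fun z => f x z ∈ T)).card : ℝ) / 2 ^ t
              - (T.card : ℝ) / 2 ^ m| ≤ ε)).card : ℝ)
        ≤ δ * 2 ^ n) :
    ∀ X : PMF (Fin n → Bool),
      (∀ x, (X x).toReal ≤ (ε / δ) * (2 : ℝ) ^ (-(n : ℤ))) →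
      ∀ T : Finset (Fin m → Bool),
        |(∑ x : Fin n → Bool, ∑ z : Fin t → Bool,
            (X x).toReal * (if f x z ∈ T then (1 : ℝ) else 0) / 2 ^ t)
          - (T.card : ℝ) / 2 ^ m| ≤ 2 * ε := by
  intro X hX T
  set μ : ℝ := (#T : ℝ) / 2 ^ m
  have hcentered : ∑ x, (X x).toReal * hitFraction f T x - μ
      = ∑ x, (X x).toReal * (hitFraction f T x - μ) := by
    simp only [mul_sub, sum_sub_distrib, ← sum_mul, X.sum_toReal_eq_one, one_mul]
  have hdist : ∀ x, |hitFraction f T x - μ| ≤ 1 := fun x =>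
    abs_sub_le_one_of_nonneg_of_le_one (hitFraction_nonneg f T x) (hitFraction_le_one f T x)
      (by positivity) (card_div_two_pow_le_one T)
  simp only [sum_mul_ite_div_eq_mul_hitFraction]
  rw [hcentered]
  calc _ ≤ ε + ∑ x ∈ univ.filter (fun x => ¬ |hitFraction f T x - μ| ≤ ε), (X x).toReal :=
        abs_sum_mul_le_add_sum_filter _ _ (fun _ => ENNReal.toReal_nonneg)
          X.sum_toReal_eq_one hdist hε.le
    _ ≤ ε + #(univ.filter fun x => ¬ |hitFraction f T x - μ| ≤ ε)
          * ((ε / δ) * 2 ^ (-(n : ℤ))) := by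
        grw [sum_le_card_nsmul _ _ _ fun x _ => hX x, nsmul_eq_mul]
    _ ≤ ε + (δ * 2 ^ n) * ((ε / δ) * 2 ^ (-(n : ℤ))) := by
        have hbad : (#(univ.filter fun x => ¬ |hitFraction f T x - μ| ≤ ε) : ℝ) ≤ δ * 2 ^ n :=
          hsamp T
        grw [hbad]
    _ = 2 * ε := by
        rw [zpow_neg, zpow_natCast]
        field_simp
        ring
end

section
/- Let w ∈ ℝ^n be a vector whose μ-critical index exceeds k (with coordinates sorted so |w₁| ≥ ... ≥ |w_n|). Then for every 1 ≤ i < j ≤ k it holds that |w_j| ≤ ‖w_{≥j}‖₂ ≤ (1-μ²)^{(j-i)/2}·‖w_{≥i}‖₂ ≤ (1-μ²)^{(j-i)/2}·|w_i|/μ. -/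
/-!
If the tail starting at `h` is not `μ`-regular then, the weights being sorted, its first entry
already violates regularity: `w_h² > μ²‖w_{≥h}‖²`. Since `‖w_{≥h}‖² = w_h² + ‖w_{≥h+1}‖²`, every
step below the critical index shrinks the squared tail norm by a factor `1 - μ²`.
-/

open Finset

noncomputable def tailSqNorm (w : ℕ → ℝ) (n h : ℕ) : ℝ := ∑ l ∈ Ico h n, w l ^ 2

def IsRegularTail (w : ℕ → ℝ) (n : ℕ) (μ : ℝ) (h : ℕ) : Prop :=
  ∀ l ∈ Ico h n, |w l| ≤ μ * √(tailSqNorm w n h)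

section
variable (w : ℕ → ℝ) (n : ℕ)

lemma tailSqNorm_nonneg (h : ℕ) : 0 ≤ tailSqNorm w n h :=
  sum_nonneg fun _ _ => sq_nonneg _

lemma tailSqNorm_eq_sq_add {h : ℕ} (hn : h < n) :
    tailSqNorm w n h = w h ^ 2 + tailSqNorm w n (h + 1) :=
  sum_eq_sum_Ico_succ_bot hn _

lemma sq_le_tailSqNorm {h : ℕ} (hn : h < n) : w h ^ 2 ≤ tailSqNorm w n h := by
  rw [tailSqNorm_eq_sq_add w n hn]
  linarith [tailSqNorm_nonneg w n (h + 1)]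

lemma abs_le_sqrt_tailSqNorm {h : ℕ} (hn : h < n) : |w h| ≤ √(tailSqNorm w n h) :=
  Real.abs_le_sqrt (sq_le_tailSqNorm w n hn)

lemma lt_and_mul_sqrt_lt_abs_of_not_isRegularTail {μ : ℝ}
    (hsort : ∀ a b : ℕ, a ≤ b → b < n → |w b| ≤ |w a|) {h : ℕ}
    (hreg : ¬ IsRegularTail w n μ h) : h < n ∧ μ * √(tailSqNorm w n h) < |w h| := by
  simp only [IsRegularTail, not_forall, not_le, mem_Ico] at hreg
  obtain ⟨l, ⟨hhl, hln⟩, hlt⟩ := hreg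
  exact ⟨hhl.trans_lt hln, hlt.trans_le (hsort h l hhl hln)⟩

lemma sq_mul_tailSqNorm_lt {μ : ℝ} (hμ : 0 ≤ μ) {h : ℕ}
    (hlt : μ * √(tailSqNorm w n h) < |w h|) : μ ^ 2 * tailSqNorm w n h < w h ^ 2 := by
  have := pow_lt_pow_left₀ hlt (by positivity) two_ne_zero
  rwa [mul_pow, Real.sq_sqrt (tailSqNorm_nonneg w n h), sq_abs] at this

lemma tailSqNorm_succ_le {μ : ℝ} {h : ℕ} (hn : h < n)
    (hlt : μ ^ 2 * tailSqNorm w n h < w h ^ 2) :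
    tailSqNorm w n (h + 1) ≤ (1 - μ ^ 2) * tailSqNorm w n h := by
  rw [tailSqNorm_eq_sq_add w n hn] at hlt ⊢
  nlinarith

lemma sq_lt_one_of_sq_mul_tailSqNorm_lt {μ : ℝ} {h : ℕ} (hn : h < n)
    (hlt : μ ^ 2 * tailSqNorm w n h < w h ^ 2) : μ ^ 2 < 1 := by
  have hle := sq_le_tailSqNorm w n hn
  have hpos : 0 < tailSqNorm w n h := by nlinarith [sq_nonneg μ]
  nlinarith

end

lemma sqrt_le_rpow_mul_sqrt_of_le_geom {u : ℕ → ℝ} {c : ℝ} (hc : 0 ≤ c) (a d : ℕ)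
    (hstep : ∀ m < d, u (a + m + 1) ≤ c * u (a + m)) :
    √(u (a + d)) ≤ c ^ ((d : ℝ) / 2) * √(u a) := by
  have hgeom : u (a + d) ≤ c ^ d * u a := le_geom (u := fun m => u (a + m)) hc d hstep
  calc √(u (a + d)) ≤ √(c ^ d * u a) := Real.sqrt_le_sqrt hgeom
    _ = c ^ ((d : ℝ) / 2) * √(u a) := by
      rw [Real.sqrt_mul (pow_nonneg hc d), Real.sqrt_eq_rpow, ← Real.rpow_natCast,
        ← Real.rpow_mul hc, mul_one_div]

/-- Servedio's lemma on exponential weight decay below the critical index.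
Weights are given as `w : ℕ → ℝ`, sorted in decreasing magnitude on `[0,n)`
(0-indexed; the paper's `w_i` is `w (i-1)`). The hypothesis that the `μ`-critical
index of `w` exceeds `k` is expressed by: for every `i ≤ k` (1-indexed), the tail
`w_{>i-1}` (0-indexed: `Finset.Ico (i-1) n`) is not `μ`-regular, equivalently
`|w_i| > μ·‖w_{≥i}‖₂`. Then for every `1 ≤ i < j ≤ k` (with `j ≤ n`):
`|w_j| ≤ ‖w_{≥j}‖₂ ≤ (1-μ²)^{(j-i)/2}·‖w_{≥i}‖₂ ≤ (1-μ²)^{(j-i)/2}·|w_i|/μ`. -/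
theorem servedio_weight_decay
    (n k : ℕ) (μ : ℝ) (hμ : 0 < μ)
    (w : ℕ → ℝ)
    (hsort : ∀ a b : ℕ, a ≤ b → b < n → |w b| ≤ |w a|)
    (hcrit : ∀ h : ℕ, h < k →
      ¬ (∀ l ∈ Finset.Ico h n,
          |w l| ≤ μ * Real.sqrt (∑ l' ∈ Finset.Ico h n, w l' ^ 2)))
    (i j : ℕ) (h1i : 1 ≤ i) (hij : i < j) (hjk : j ≤ k) (hjn : j ≤ n) :
    |w (j - 1)| ≤ Real.sqrt (∑ l ∈ Finset.Ico (j - 1) n, w l ^ 2) ∧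
    Real.sqrt (∑ l ∈ Finset.Ico (j - 1) n, w l ^ 2)
      ≤ (1 - μ ^ 2) ^ (((j : ℝ) - (i : ℝ)) / 2) *
          Real.sqrt (∑ l ∈ Finset.Ico (i - 1) n, w l ^ 2) ∧
    (1 - μ ^ 2) ^ (((j : ℝ) - (i : ℝ)) / 2) *
        Real.sqrt (∑ l ∈ Finset.Ico (i - 1) n, w l ^ 2)
      ≤ (1 - μ ^ 2) ^ (((j : ℝ) - (i : ℝ)) / 2) * |w (i - 1)| / μ := by
  have hfirst : ∀ h < k, h < n ∧ μ * √(tailSqNorm w n h) < |w h| := fun h hk =>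
    lt_and_mul_sqrt_lt_abs_of_not_isRegularTail w n hsort (hcrit h hk)
  have hsq : ∀ h < k, μ ^ 2 * tailSqNorm w n h < w h ^ 2 := fun h hk =>
    sq_mul_tailSqNorm_lt w n hμ.le (hfirst h hk).2
  have hc : 0 ≤ 1 - μ ^ 2 := by
    linarith [sq_lt_one_of_sq_mul_tailSqNorm_lt w n (hfirst 0 (by omega)).1 (hsq 0 (by omega))]
  have hdecay := sqrt_le_rpow_mul_sqrt_of_le_geom hc (i - 1) (j - i) fun m hm =>
    tailSqNorm_succ_le w n (hfirst _ (by omega)).1 (hsq _ (by omega))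
  rw [show i - 1 + (j - i) = j - 1 by omega, Nat.cast_sub hij.le] at hdecay
  refine ⟨abs_le_sqrt_tailSqNorm w n (by omega), hdecay, ?_⟩
  have hhead : √(tailSqNorm w n (i - 1)) ≤ |w (i - 1)| / μ := by
    rw [le_div_iff₀ hμ, mul_comm]
    exact (hfirst (i - 1) (by omega)).2.le
  rw [mul_div_assoc]
  exact mul_le_mul_of_nonneg_left hhead (by positivity)
end

section
/- Let Φ(x) = sgn(Σ_{i∈[n]} x_i) be the majority function and let p = n^{-Ω(1)}. Let ρ ∼ R_p be a random restriction in which each variable independently stays alive with probability p and is otherwise fixed to a uniform random bit. Then for every t ≥ 1, with probability at least 1 - O(t·√p) over ρ, the restricted function Φ↾ρ is t-imbalanced. -/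
open Finset
open scoped Classical

noncomputable section

/-- `pm b` maps a Boolean to the corresponding element of `{-1,1} ⊆ ℝ`. -/
def pm (b : Bool) : ℝ := if b then 1 else -1

/-!
Conditioned on the live set `I`, the restricted majority is balanced only when the sum of the
`m = n - |I|` fixed signs lands in an interval of length `2t√|I|`. Every binomial coefficient
satisfies `C(m, k)² (m + 1) ≤ 4^m`, so this happens with probability at most
`(t√|I| + 1) / √(m + 1)`, which is `O((t√|I| + 1) / √n)` when at least half of the variables are
fixed; otherwise we use the trivial bound `1 ≤ 2|I| / n`. Averaging over the live set with
`E|I| = pn` and Jensen's `E√|I| ≤ √(pn)` bounds the balanced probability by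
`2p + √2 t√p + √2/√n`, and `p ≥ 1/n` turns this into `5t√p`.
-/

theorem Nat.centralBinom_sq_mul_le (r : ℕ) : r.centralBinom ^ 2 * (2 * r + 1) ≤ 16 ^ r := by
  induction r with
  | zero => simp
  | succ r ih =>
    refine Nat.le_of_mul_le_mul_left (c := (r + 1) ^ 2) ?_ (by positivity)
    calc (r + 1) ^ 2 * ((r + 1).centralBinom ^ 2 * (2 * (r + 1) + 1))
        = ((r + 1) * (r + 1).centralBinom) ^ 2 * (2 * r + 3) := by ring
      _ = 4 * ((2 * r + 1) * (2 * r + 3)) * (r.centralBinom ^ 2 * (2 * r + 1)) := by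
          rw [Nat.succ_mul_centralBinom_succ]; ring
      _ ≤ 4 * (4 * (r + 1) ^ 2) * 16 ^ r :=
          Nat.mul_le_mul (Nat.mul_le_mul_left _ (by nlinarith)) ih
      _ = (r + 1) ^ 2 * 16 ^ (r + 1) := by ring

theorem Nat.choose_sq_mul_succ_le (m k : ℕ) : m.choose k ^ 2 * (m + 1) ≤ 4 ^ m := by
  obtain ⟨r, rfl | rfl⟩ := Nat.even_or_odd' m
  · calc (2 * r).choose k ^ 2 * (2 * r + 1) ≤ r.centralBinom ^ 2 * (2 * r + 1) := by
          gcongr; exact Nat.choose_le_centralBinom k r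
      _ ≤ 16 ^ r := Nat.centralBinom_sq_mul_le r
      _ = 4 ^ (2 * r) := by rw [pow_mul]; norm_num
  · have hmid : (2 * r + 1).choose k ≤ (2 * r + 1).choose r := by
      simpa [Nat.mul_add_div] using Nat.choose_le_middle k (2 * r + 1)
    have hdouble : 2 * (2 * r + 1).choose r = (r + 1).centralBinom := by
      rw [Nat.centralBinom, show 2 * (r + 1) = 2 * r + 1 + 1 by ring, Nat.choose_succ_succ,
        Nat.choose_symm_half]
      ring
    refine Nat.le_of_mul_le_mul_left (c := 4) ?_ (by norm_num)
    calc 4 * ((2 * r + 1).choose k ^ 2 * (2 * r + 1 + 1))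
        ≤ 4 * ((2 * r + 1).choose r ^ 2 * (2 * (r + 1) + 1)) := by gcongr; omega
      _ = (r + 1).centralBinom ^ 2 * (2 * (r + 1) + 1) := by rw [← hdouble]; ring
      _ ≤ 16 ^ (r + 1) := Nat.centralBinom_sq_mul_le _
      _ = 4 * 4 ^ (2 * r + 1) := by rw [pow_succ, pow_succ, pow_mul]; norm_num; ring

theorem Nat.choose_mul_sqrt_succ_le (m k : ℕ) : (m.choose k : ℝ) * √(m + 1) ≤ 2 ^ m := by
  rw [← Real.sqrt_sq (by positivity : (0 : ℝ) ≤ 2 ^ m),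
    ← Real.sqrt_sq (Nat.cast_nonneg (α := ℝ) (m.choose k)), ← Real.sqrt_mul (by positivity)]
  refine Real.sqrt_le_sqrt ?_
  rw [← pow_mul, mul_comm m 2, pow_mul]
  exact_mod_cast Nat.choose_sq_mul_succ_le m k

theorem Finset.card_le_of_forall_sub_le {K : Finset ℕ} {L : ℝ} (hL : 0 ≤ L)
    (h : ∀ a ∈ K, ∀ b ∈ K, (a : ℝ) - b ≤ L) : (#K : ℝ) ≤ L + 1 := by
  rcases K.eq_empty_or_nonempty with rfl | hK
  · simp only [card_empty, Nat.cast_zero]; linarith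
  have hsub : K ⊆ Icc (K.min' hK) (K.max' hK) := fun a ha =>
    mem_Icc.2 ⟨K.min'_le a ha, K.le_max' a ha⟩
  have hspan := h _ (K.max'_mem hK) _ (K.min'_mem hK)
  have hle := K.min'_le _ (K.max'_mem hK)
  calc (#K : ℝ) ≤ #(Icc (K.min' hK) (K.max' hK)) := by exact_mod_cast card_le_card hsub
    _ = K.max' hK - K.min' hK + 1 := by
        rw [Nat.card_Icc]; push_cast [Nat.sub_add_comm hle, hle]; ring
    _ ≤ L + 1 := by linarith

theorem sum_pm_eq {ι : Type*} (F : Finset ι) (z : ι → Bool) :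
    ∑ i ∈ F, pm (z i) = 2 * #(F.filter fun i => z i = true) - #F := by
  have hpm : ∀ b, pm b = 2 * (if b = true then 1 else 0) - 1 := by
    intro b; cases b <;> norm_num [pm]
  simp only [hpm, sum_sub_distrib, ← mul_sum, sum_boole, sum_const, nsmul_eq_mul, mul_one]

theorem card_sub_card_filter_eq_false {ι : Type*} [Fintype ι] (s : ι → Bool) :
    (Fintype.card ι : ℝ) - #(univ.filter fun i => s i = false)
      = #(univ.filter fun i => s i = true) := by
  have := card_filter_add_card_filter_not (s := univ) fun i => s i = true
  simp only [Bool.not_eq_true, card_univ] at this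
  rw [sub_eq_iff_eq_add]; exact_mod_cast this.symm

section Counting

variable {ι : Type*} [Fintype ι] [DecidableEq ι]

theorem card_filter_card_filter_eq_le (F : Finset ι) (k : ℕ) :
    #(univ.filter fun z : ι → Bool => #(F.filter fun i => z i = true) = k)
      ≤ (#F).choose k * 2 ^ (Fintype.card ι - #F) := by
  rw [← card_powersetCard, ← card_compl, ← card_powerset, ← card_product]
  refine card_le_card_of_injOn (fun z => (F.filter (z · = true), Fᶜ.filter (z · = true)))
    (fun z hz => ?_) (fun z _ z' _ h => ?_)
  · have hk : #(F.filter fun i => z i = true) = k := by simpa using hz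
    exact mem_product.2 ⟨mem_powersetCard.2 ⟨filter_subset _ _, hk⟩,
      mem_powerset.2 (filter_subset _ _)⟩
  · simp only [Prod.mk.injEq, Finset.ext_iff, mem_filter, mem_compl] at h
    funext i
    by_cases hi : i ∈ F
    · simpa [hi] using h.1 i
    · simpa [hi] using h.2 i

theorem card_abs_sum_pm_le_mul_sqrt_le (F : Finset ι) {lam : ℝ} (hlam : 0 ≤ lam) :
    (#(univ.filter fun z : ι → Bool => |∑ i ∈ F, pm (z i)| ≤ lam) : ℝ) * √(#F + 1)
      ≤ (lam + 1) * 2 ^ Fintype.card ι := by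
  set m := #F
  set K := (range (m + 1)).filter fun k : ℕ => |2 * (k : ℝ) - m| ≤ lam
  have hsub : univ.filter (fun z : ι → Bool => |∑ i ∈ F, pm (z i)| ≤ lam)
      ⊆ K.biUnion fun k => univ.filter fun z => #(F.filter fun i => z i = true) = k := by
    intro z hz
    simp only [mem_filter, mem_univ, true_and, sum_pm_eq] at hz
    simp only [mem_biUnion, mem_filter, mem_range, mem_univ, true_and, exists_eq_right', K]
    exact ⟨Nat.lt_succ_of_le (card_filter_le _ _), hz⟩
  have hcount : (#(univ.filter fun z : ι → Bool => |∑ i ∈ F, pm (z i)| ≤ lam) : ℝ)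
      ≤ ∑ k ∈ K, (m.choose k : ℝ) * 2 ^ (Fintype.card ι - m) := by
    exact_mod_cast (card_le_card hsub).trans <| card_biUnion_le.trans <|
      sum_le_sum fun k _ => card_filter_card_filter_eq_le F k
  have hK : (#K : ℝ) ≤ lam + 1 := by
    refine card_le_of_forall_sub_le hlam fun a ha b hb => ?_
    simp only [K, mem_filter, abs_le] at ha hb
    linarith
  calc _ ≤ (∑ k ∈ K, (m.choose k : ℝ) * 2 ^ (Fintype.card ι - m)) * √(m + 1) := by gcongr
    _ = ∑ k ∈ K, (m.choose k : ℝ) * √(m + 1) * 2 ^ (Fintype.card ι - m) := by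
        rw [sum_mul]; congr! 1 with k; ring
    _ ≤ ∑ k ∈ K, (2 : ℝ) ^ m * 2 ^ (Fintype.card ι - m) := by
        gcongr with k; exact Nat.choose_mul_sqrt_succ_le m k
    _ = #K * 2 ^ Fintype.card ι := by
        rw [sum_const, nsmul_eq_mul, ← pow_add, Nat.add_sub_cancel' (card_le_univ F)]
    _ ≤ (lam + 1) * 2 ^ Fintype.card ι := by gcongr

theorem one_sub_le_card_lt_abs_sum_pm_div (F : Finset ι) {lam : ℝ} (hlam : 0 ≤ lam)
    (hι : 0 < Fintype.card ι) :
    1 - (2 * (Fintype.card ι - #F) / Fintype.card ι + √2 * (lam + 1) / √(Fintype.card ι))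
      ≤ #(univ.filter fun z : ι → Bool => lam < |∑ i ∈ F, pm (z i)|) / 2 ^ Fintype.card ι := by
  set n := Fintype.card ι
  set bal := #(univ.filter fun z : ι → Bool => |∑ i ∈ F, pm (z i)| ≤ lam)
  have hn : (0 : ℝ) < n := by exact_mod_cast hι
  have hF : (#F : ℝ) ≤ n := by exact_mod_cast card_le_univ F
  have hsplit : (#(univ.filter fun z : ι → Bool => lam < |∑ i ∈ F, pm (z i)|) : ℝ)
      = 2 ^ n - bal := by
    have := card_filter_add_card_filter_not (s := (univ : Finset (ι → Bool)))
      fun z => lam < |∑ i ∈ F, pm (z i)|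
    simp only [not_lt, card_univ, Fintype.card_fun, Fintype.card_bool] at this
    rw [eq_sub_iff_add_eq]; exact_mod_cast this
  rw [hsplit, sub_div, div_self (by positivity)]
  suffices (bal : ℝ) / 2 ^ n ≤ 2 * (n - #F) / n + √2 * (lam + 1) / √n by linarith
  rcases le_or_gt (n : ℝ) (2 * (n - #F)) with hfew | hmany
  · have hbal : (bal : ℝ) ≤ 2 ^ n := by
      exact_mod_cast (card_filter_le _ _).trans_eq (by simp [n])
    calc (bal : ℝ) / 2 ^ n ≤ 1 := div_le_one_of_le₀ hbal (by positivity)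
      _ ≤ 2 * (n - #F) / n := (one_le_div hn).2 hfew
      _ ≤ _ := le_add_of_nonneg_right (by positivity)
  · have hsqrt : √n ≤ √2 * √(#F + 1) := by
      rw [← Real.sqrt_mul zero_le_two]; exact Real.sqrt_le_sqrt (by linarith)
    have hbal := card_abs_sum_pm_le_mul_sqrt_le F hlam
    calc (bal : ℝ) / 2 ^ n ≤ √2 * (lam + 1) / √n := by
          rw [div_le_div_iff₀ (by positivity) (by positivity)]
          calc (bal : ℝ) * √n ≤ √2 * ((bal : ℝ) * √(#F + 1)) := by
                rw [mul_left_comm]; gcongr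
            _ ≤ √2 * ((lam + 1) * 2 ^ n) := by gcongr
            _ = _ := by ring
      _ ≤ _ := le_add_of_nonneg_left (by apply div_nonneg <;> linarith)

end Counting

section RandomRestriction

variable {ι : Type*} [Fintype ι] [DecidableEq ι] (p : ℝ)

theorem sum_prod_ite_eq_one : ∑ s : ι → Bool, ∏ i, (if s i then p else 1 - p) = 1 := by
  rw [← Fintype.prod_sum (R := ℝ) fun (_ : ι) (b : Bool) => if b then p else 1 - p]; simp

theorem sum_prod_ite_mul_apply (i : ι) (g : Bool → ℝ) :
    ∑ s : ι → Bool, (∏ j, if s j then p else 1 - p) * g (s i)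
      = p * g true + (1 - p) * g false := by
  have hprod : ∀ s : ι → Bool, (∏ j, if s j then p else 1 - p) * g (s i)
      = ∏ j, (if s j then p else 1 - p) * (if j = i then g (s j) else 1) := by
    intro s; rw [prod_mul_distrib, prod_ite_eq' univ i]; simp
  rw [sum_congr rfl fun s _ => hprod s, ← Fintype.prod_sum (R := ℝ) fun (j : ι) (b : Bool) =>
    (if b then p else 1 - p) * (if j = i then g b else 1),
    Fintype.prod_eq_single i fun j hj => by simp [hj]]
  simp

theorem sum_prod_ite_mul_card_filter :
    ∑ s : ι → Bool, (∏ i, if s i then p else 1 - p) * #(univ.filter fun i => s i = true)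
      = p * Fintype.card ι := by
  simp only [card_filter, Nat.cast_sum, Nat.cast_ite, Nat.cast_one, Nat.cast_zero, mul_sum]
  rw [sum_comm]
  calc _ = ∑ i : ι, p := sum_congr rfl fun i _ => by
        simpa using sum_prod_ite_mul_apply p i fun b => if b then 1 else 0
    _ = _ := by simp [mul_comm]

variable {p}

theorem sum_prod_ite_mul_sqrt_card_filter_le (hp0 : 0 ≤ p) (hp1 : p ≤ 1) :
    ∑ s : ι → Bool, (∏ i, if s i then p else 1 - p) * √(#(univ.filter fun i => s i = true))
      ≤ √(p * Fintype.card ι) := by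
  rw [← sum_prod_ite_mul_card_filter]
  exact Real.strictConcaveOn_sqrt.concaveOn.le_map_sum
    (fun s _ => prod_nonneg fun i _ => by split_ifs <;> linarith) (sum_prod_ite_eq_one p)
    (fun s _ => Set.mem_Ici.2 (Nat.cast_nonneg _))

theorem one_sub_le_prob_majority_restrict_imbalanced (hp0 : 0 ≤ p) (hp1 : p ≤ 1) {t : ℝ}
    (ht : 0 ≤ t) (hι : 0 < Fintype.card ι) :
    1 - (2 * p + √2 * t * √p + √2 / √(Fintype.card ι)) ≤
      ∑ s : ι → Bool, ∑ z : ι → Bool,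
        ((∏ i, if s i then p else 1 - p) * (1 / 2 ^ Fintype.card ι)) *
          (if t * √(#(univ.filter fun i => s i = true) : ℝ) <
              |∑ i ∈ univ.filter (fun i => s i = false), pm (z i)| then 1 else 0) := by
  set n := Fintype.card ι
  set w := fun s : ι → Bool => ∏ i, if s i then p else 1 - p
  set ℓ := fun s : ι → Bool => (#(univ.filter fun i => s i = true) : ℝ)
  have hn : (0 : ℝ) < n := by exact_mod_cast hι
  have hcond : ∀ s, 1 - (2 * ℓ s / n + √2 * (t * √(ℓ s) + 1) / √n) ≤
      #(univ.filter fun z : ι → Bool => t * √(ℓ s) <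
        |∑ i ∈ univ.filter (fun i => s i = false), pm (z i)|) / 2 ^ n := fun s => by
    simpa only [card_sub_card_filter_eq_false] using
      one_sub_le_card_lt_abs_sum_pm_div (univ.filter fun i => s i = false) (by positivity) hι
  have hsqrt : √2 * t / √n * ∑ s, w s * √(ℓ s) ≤ √2 * t * √p := by
    calc √2 * t / √n * ∑ s, w s * √(ℓ s) ≤ √2 * t / √n * √(p * n) := by
          gcongr; exact sum_prod_ite_mul_sqrt_card_filter_le hp0 hp1
      _ = √2 * t * √p := by rw [Real.sqrt_mul hp0]; field_simp
  calc _ ≤ ∑ s, w s - 2 / n * ∑ s, w s * ℓ s - √2 * t / √n * ∑ s, w s * √(ℓ s)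
        - √2 / √n * ∑ s, w s := by
        have hmean : 2 / (n : ℝ) * (p * n) = 2 * p := by field_simp
        rw [sum_prod_ite_mul_card_filter, sum_prod_ite_eq_one, hmean]
        linarith
    _ = ∑ s, w s * (1 - (2 * ℓ s / n + √2 * (t * √(ℓ s) + 1) / √n)) := by
        rw [mul_sum, mul_sum, mul_sum, ← sum_sub_distrib, ← sum_sub_distrib, ← sum_sub_distrib]
        exact sum_congr rfl fun s _ => by ring
    _ ≤ ∑ s, w s * (#(univ.filter fun z : ι → Bool => t * √(ℓ s) <
          |∑ i ∈ univ.filter (fun i => s i = false), pm (z i)|) / 2 ^ n) := by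
        gcongr with s; exact hcond s
    _ = _ := sum_congr rfl fun s _ => by rw [← mul_sum, sum_boole]; ring

end RandomRestriction

/-- A random restriction and the majority function `MAJ(x) = sgn(∑ᵢ xᵢ)`.
For `p = n^{-α}` with a constant `α ∈ (0,1]` (i.e. `p = n^{-Ω(1)}`), consider a
random restriction `ρ ∼ R_p`: each variable independently stays alive (`s i = true`)
with probability `p` and is otherwise fixed to a uniform random bit (`z i`). The
restricted function is the LTF `(w_I, -∑_{i∉I} z_i)` where `I` is the set of live
variables, and it is `t`-imbalanced when `|∑_{i∉I} z_i| > t·‖w_I‖₂ = t·√|I|`.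
Then there is a constant `C` such that for every `t ≥ 1`, the probability over
`ρ ∼ R_p` that `MAJ↾ρ` is `t`-imbalanced is at least `1 - C·t·√p`. -/
theorem majority_random_restriction_imbalanced
    (α : ℝ) (hα0 : 0 < α) (hα1 : α ≤ 1) :
    ∃ C : ℝ, 0 < C ∧
      ∀ (n : ℕ) (p t : ℝ), 0 < n → p = (n : ℝ) ^ (-α) → 1 ≤ t →
        1 - C * t * Real.sqrt p ≤
          ∑ s : Fin n → Bool, ∑ z : Fin n → Bool,
            ((∏ i, if s i then p else 1 - p) * (1 / 2 ^ n)) *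
              (if t * Real.sqrt (((univ.filter (fun i : Fin n => s i = true)).card : ℝ)) <
                  |∑ i ∈ univ.filter (fun i : Fin n => s i = false), pm (z i)|
               then 1 else 0) := by
  refine ⟨5, by norm_num, fun n p t hn hp ht => ?_⟩
  have hn1 : (1 : ℝ) ≤ n := by exact_mod_cast hn
  have hp0 : 0 < p := hp ▸ Real.rpow_pos_of_pos (by linarith) _
  have hp1 : p ≤ 1 := hp ▸ Real.rpow_le_one_of_one_le_of_nonpos hn1 (by linarith)
  have hpn : 1 ≤ p * n := by
    rw [hp, ← Real.rpow_add_one (by positivity)]; exact Real.one_le_rpow hn1 (by linarith)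
  have hsqrt2 : √2 ≤ 3 / 2 := Real.sqrt_le_iff.2 ⟨by norm_num, by norm_num⟩
  have hp_le : p ≤ √p := Real.le_sqrt_of_sq_le (by nlinarith)
  have hn_inv : √2 / √n ≤ 3 / 2 * √p := by
    rw [div_le_iff₀ (by positivity), mul_assoc, ← Real.sqrt_mul hp0.le]
    nlinarith [Real.one_le_sqrt.2 hpn]
  have hsp : √p ≤ t * √p := le_mul_of_one_le_left (Real.sqrt_nonneg p) ht
  have hmain := one_sub_le_prob_majority_restrict_imbalanced (ι := Fin n) hp0.le hp1
    (by linarith : 0 ≤ t) (by simpa using hn)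
  rw [Fintype.card_fin] at hmain
  refine le_trans ?_ hmain
  linarith [mul_le_mul_of_nonneg_right hsqrt2 (by positivity : 0 ≤ t * √p)]

end
end

section
/- Let G be a d_G-regular graph on n̂ vertices with second eigenvalue bound giving the hitting property: for any set A of density ρ, a random walk of length ℓ-1 (ℓ vertices) starting from a uniform vertex avoids A with probability at most ε when ℓ ≥ (c_G/ρ)·log(1/ε). For x̂ ∈ {0,1}^{n̂} with relative Hamming weight at least ρ, define the encoding x̄ whose coordinates are indexed by pairs (W,S) of a walk W = (i₁,...,i_ℓ) and a subset S ⊆ [ℓ], with value x̄_{(W,S)} = ⊕_{j∈S} x̂_{i_j}. Then the relative Hamming weight of x̄ is at least 1/2 - ε and at most 1/2. -/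
/-!
For a fixed walk, toggling one position at which `x̂` equals `1` exchanges the subsets `S` of odd
and of even parity, so exactly half of the subsets give parity `1` when the walk meets the support
of `x̂`, and none do otherwise. The weight of `x̄` is therefore half the fraction of walks meeting
the support, and the hitting property bounds that fraction below by `1 - ε`.
-/

open Finset
open scoped Classical

/-- The `j`-th vertex (for `j : Fin (L+1)`) of the walk on a `dG`-regular graph
(given by a neighbor function `nbr`) that starts at `v` and follows the `L` edge
labels `e`. -/
def walkVert {V : Type*} {dG L : ℕ} (nbr : V → Fin dG → V)
    (v : V) (e : Fin L → Fin dG) (j : Fin (L + 1)) : V :=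
  (List.range j.val).foldl (fun u k => if h : k < L then nbr u (e ⟨k, h⟩) else u) v

open scoped symmDiff

lemma ZMod.eq_zero_or_eq_one (a : ZMod 2) : a = 0 ∨ a = 1 := by
  revert a; decide

lemma CharTwo.sum_symmDiff_singleton {ι R : Type*} [DecidableEq ι] [Ring R] [CharP R 2]
    (f : ι → R) (S : Finset ι) (j : ι) : ∑ i ∈ S ∆ {j}, f i = ∑ i ∈ S, f i + f j := by
  by_cases hj : j ∈ S
  · have hS : S ∆ {j} = S.erase j := by
      ext; simp only [mem_symmDiff, mem_singleton, mem_erase]; grind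
    rw [hS, sum_erase_eq_sub hj, sub_eq_add_neg, CharTwo.neg_eq]
  · have hS : S ∆ {j} = insert j S := by
      ext; simp only [mem_symmDiff, mem_singleton, mem_insert]; grind
    rw [hS, sum_insert hj, add_comm]

section ParityCount

variable {ι : Type*} [Fintype ι] [DecidableEq ι]

lemma two_mul_card_filter_sum_eq_one {f : ι → ZMod 2} (hf : f ≠ 0) :
    2 * #{S : Finset ι | ∑ i ∈ S, f i = 1} = 2 ^ Fintype.card ι := by
  obtain ⟨j, hj⟩ := Function.ne_iff.mp hf
  replace hj : f j = 1 := (ZMod.eq_zero_or_eq_one _).resolve_left hj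
  have hflip : #{S : Finset ι | ∑ i ∈ S, f i = 1} = #{S : Finset ι | ¬∑ i ∈ S, f i = 1} := by
    refine card_nbij' (· ∆ {j}) (· ∆ {j}) ?_ ?_
      (fun S _ => symmDiff_symmDiff_cancel_right _ _)
      (fun S _ => symmDiff_symmDiff_cancel_right _ _) <;>
    · intro S
      simp only [coe_filter, mem_univ, true_and, Set.mem_ofPred_eq,
        CharTwo.sum_symmDiff_singleton, hj]
      rcases ZMod.eq_zero_or_eq_one (∑ i ∈ S, f i) with h | h <;> simp [h]
  have hsplit := card_filter_add_card_filter_not (s := (univ : Finset (Finset ι)))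
    (fun S => ∑ i ∈ S, f i = 1)
  rw [card_univ, Fintype.card_finset] at hsplit
  omega

lemma two_mul_card_filter_prod_sum_eq_one {W : Type*} [Fintype W] (x : W → ι → ZMod 2) :
    2 * #{p : W × Finset ι | ∑ i ∈ p.2, x p.1 i = 1}
      = 2 ^ Fintype.card ι * #{w | x w ≠ 0} := by
  simp only [card_filter, Fintype.sum_prod_type, mul_sum]
  refine sum_congr rfl fun w _ => ?_
  rw [← mul_sum, ← card_filter]
  split_ifs with hw
  · rw [two_mul_card_filter_sum_eq_one hw, mul_one]
  · simp [not_not.mp hw]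

end ParityCount

theorem expander_walk_distance_amplification_general
    (V : Type*) [Fintype V] [DecidableEq V] (dG L : ℕ) (ρ ε : ℝ)
    (nbr : V → Fin dG → V)
    (hhit : ∀ A : Finset V, ρ ≤ (A.card : ℝ) / (Fintype.card V : ℝ) →
      ((((univ : Finset (V × (Fin L → Fin dG)))).filter
          (fun wk => ∀ j : Fin (L + 1), walkVert nbr wk.1 wk.2 j ∉ A)).card : ℝ)
        ≤ ε * (Fintype.card (V × (Fin L → Fin dG)) : ℝ))
    (xhat : V → ZMod 2)
    (hweight : ρ * (Fintype.card V : ℝ) ≤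
      (((univ : Finset V).filter (fun v => xhat v ≠ 0)).card : ℝ)) :
    (1 / 2 - ε) * (Fintype.card ((V × (Fin L → Fin dG)) × Finset (Fin (L + 1))) : ℝ)
      ≤ ((((univ : Finset ((V × (Fin L → Fin dG)) × Finset (Fin (L + 1))))).filter
          (fun ws => (∑ j ∈ ws.2, xhat (walkVert nbr ws.1.1 ws.1.2 j)) = 1)).card : ℝ) ∧
    ((((univ : Finset ((V × (Fin L → Fin dG)) × Finset (Fin (L + 1))))).filter
          (fun ws => (∑ j ∈ ws.2, xhat (walkVert nbr ws.1.1 ws.1.2 j)) = 1)).card : ℝ)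
      ≤ (1 / 2) * (Fintype.card ((V × (Fin L → Fin dG)) × Finset (Fin (L + 1))) : ℝ) := by
  set A : Finset V := {v | xhat v ≠ 0}
  set N := Fintype.card (V × (Fin L → Fin dG))
  set B : Finset (V × (Fin L → Fin dG)) := {w | ∀ j : Fin (L + 1), walkVert nbr w.1 w.2 j ∉ A}
  set x : V × (Fin L → Fin dG) → Fin (L + 1) → ZMod 2 := fun w j => xhat (walkVert nbr w.1 w.2 j)
  have hcount := two_mul_card_filter_prod_sum_eq_one x
  rw [Fintype.card_fin, pow_succ] at hcount
  have hsplit : #{w | x w ≠ 0} + #B = N := by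
    have h := card_filter_add_card_filter_not (s := univ) (fun w => x w ≠ 0)
    rw [card_univ] at h
    convert h using 3
    ext w
    simp [B, A, x, funext_iff]
  have hB : (#B : ℝ) ≤ ε * N := by
    rcases (Fintype.card V).eq_zero_or_pos with hV | hV
    · have hN : N = 0 := by simp [N, hV]
      have hB0 : #B = 0 := Nat.eq_zero_of_le_zero (hN ▸ card_le_univ B)
      simp [hB0, hN]
    · exact hhit A ((le_div_iff₀ (by exact_mod_cast hV)).mpr hweight)
  have htotal : Fintype.card ((V × (Fin L → Fin dG)) × Finset (Fin (L + 1)))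
      = N * (2 * 2 ^ L) := by
    simp [N, pow_succ, mul_comm]
  have hcountR : 2 * (#{p : _ × Finset (Fin (L + 1)) | ∑ i ∈ p.2, x p.1 i = 1} : ℝ)
      = 2 ^ L * 2 * #{w | x w ≠ 0} := by exact_mod_cast hcount
  have hsplitR : (#{w | x w ≠ 0} : ℝ) + #B = N := by exact_mod_cast hsplit
  have hq : (0 : ℝ) < 2 ^ L := by positivity
  rw [htotal]
  push_cast
  constructor <;> nlinarith [(#B).cast_nonneg (α := ℝ)]

/-- Expander-walk distance amplification (Naor–Naor). Let `G` be a `dG`-regular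
graph on the vertex set `V`, given by a neighbor function `nbr`, with the hitting
property: for every `A ⊆ V` of density at least `ρ`, the fraction of walks with
`ℓ = L+1` vertices (a uniformly random start plus `L` uniformly random edge
labels) that avoid `A` is at most `ε`. Let `xhat : V → GF(2)` have relative Hamming
weight at least `ρ`, and define the encoding `x̄` indexed by pairs `(W,S)` of a
walk `W` and a subset `S ⊆ [ℓ]`, with `x̄_{(W,S)} = ⊕_{j∈S} xhat_{i_j}` (the parity
of the bits of `xhat` at the `S`-positions of `W`). Then the relative Hamming weight
of `x̄` is at least `1/2 - ε` and at most `1/2`. -/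
theorem expander_walk_distance_amplification
    (V : Type*) [Fintype V] [DecidableEq V] (dG L : ℕ) (ρ ε : ℝ) (hε : 0 ≤ ε)
    (nbr : V → Fin dG → V)
    (hhit : ∀ A : Finset V, ρ ≤ (A.card : ℝ) / (Fintype.card V : ℝ) →
      ((((univ : Finset (V × (Fin L → Fin dG)))).filter
          (fun wk => ∀ j : Fin (L + 1), walkVert nbr wk.1 wk.2 j ∉ A)).card : ℝ)
        ≤ ε * (Fintype.card (V × (Fin L → Fin dG)) : ℝ))
    (xhat : V → ZMod 2)
    (hweight : ρ * (Fintype.card V : ℝ) ≤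
      (((univ : Finset V).filter (fun v => xhat v ≠ 0)).card : ℝ)) :
    (1 / 2 - ε) * (Fintype.card ((V × (Fin L → Fin dG)) × Finset (Fin (L + 1))) : ℝ)
      ≤ ((((univ : Finset ((V × (Fin L → Fin dG)) × Finset (Fin (L + 1))))).filter
          (fun ws => (∑ j ∈ ws.2, xhat (walkVert nbr ws.1.1 ws.1.2 j)) = 1)).card : ℝ) ∧
    ((((univ : Finset ((V × (Fin L → Fin dG)) × Finset (Fin (L + 1))))).filter
          (fun ws => (∑ j ∈ ws.2, xhat (walkVert nbr ws.1.1 ws.1.2 j)) = 1)).card : ℝ)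
      ≤ (1 / 2) * (Fintype.card ((V × (Fin L → Fin dG)) × Finset (Fin (L + 1))) : ℝ) :=
  expander_walk_distance_amplification_general V dG L ρ ε nbr hhit xhat hweight
end

section
/- Let y be a distribution over {0,1}^n that is p-bounded in pairs, and for each i ∈ [m], let k_i ∈ [m] be distinct indices (a ranking of coordinates). Then for every fixed i ∈ [m], Pr_{y}[y_i = 1 and Σ_j y_j ≥ 2] ≤ min{p, m·p²} ≤ sqrt(m·p³), and consequently Σ_{i∈[m]} (1/√(k_i)) · Pr[y_i = 1 ∧ Σ_j y_j ≥ 2] ≤ O(m·p^{3/2}). -/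
/-! If `y_i = 1` and at least two coordinates are `1`, then `y_i = y_j = 1` for some `j ≠ i`,
so a union bound over `j` gives `m p²` next to the trivial bound `p`, and `min {a, b} ≤ √(ab)`.
Summing, `∑ 1 / √(k_i + 1) ≤ 2 √m` telescopes from `1 / √(x + 1) ≤ 2 (√(x + 1) - √x)`. -/

open Finset
open scoped Classical

noncomputable section

section Pr

variable {α : Type*} [Fintype α] (p : PMF α)

lemma pr_mono {P Q : α → Prop} (h : ∀ x, P x → Q x) : pr p P ≤ pr p Q := by
  refine sum_le_sum fun x _ => ?_
  by_cases hP : P x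
  · simp [hP, h x hP]
  · simp only [hP, if_false]
    positivity

lemma pr_exists_mem_le_sum {ι : Type*} (s : Finset ι) (P : ι → α → Prop) :
    pr p (fun x => ∃ j ∈ s, P j x) ≤ ∑ j ∈ s, pr p (P j) := by
  unfold pr
  rw [sum_comm]
  refine sum_le_sum fun x _ => ?_
  split_ifs with h
  · obtain ⟨j, hjs, hj⟩ := h
    calc (p x).toReal = if P j x then (p x).toReal else 0 := by simp [hj]
      _ ≤ ∑ j ∈ s, if P j x then (p x).toReal else 0 :=
        single_le_sum (f := fun j => if P j x then (p x).toReal else 0)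
          (fun _ _ => by positivity) hjs
  · positivity

end Pr

section BoundedInPairs

variable {ι : Type*} [Fintype ι] [DecidableEq ι] (y : PMF (ι → Bool))

lemma pr_coord_and_two_le_card_le_sum_pairs (i : ι) :
    pr y (fun v => v i = true ∧ 2 ≤ #(univ.filter fun j => v j = true))
      ≤ ∑ j ∈ univ.erase i, pr y (fun v => v i = true ∧ v j = true) := by
  refine le_trans (pr_mono y ?_) (pr_exists_mem_le_sum y _ _)
  rintro v ⟨hvi, hcard⟩
  obtain ⟨j, hj, hji⟩ := exists_mem_ne hcard i
  exact ⟨j, mem_erase.mpr ⟨hji, mem_univ j⟩, hvi, (mem_filter.mp hj).2⟩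

lemma pr_coord_and_two_le_card_le_min {p : ℝ}
    (h₁ : ∀ i, pr y (fun v => v i = true) ≤ p)
    (h₂ : ∀ i j, i ≠ j → pr y (fun v => v i = true ∧ v j = true) ≤ p ^ 2) (i : ι) :
    pr y (fun v => v i = true ∧ 2 ≤ #(univ.filter fun j => v j = true))
      ≤ min p (Fintype.card ι * p ^ 2) := by
  refine le_min ((pr_mono y fun v hv => hv.1).trans (h₁ i)) ?_
  calc _ ≤ ∑ j ∈ univ.erase i, pr y (fun v => v i = true ∧ v j = true) :=
        pr_coord_and_two_le_card_le_sum_pairs y i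
    _ ≤ ∑ _j ∈ univ.erase i, p ^ 2 := sum_le_sum fun j hj => h₂ i j (ne_of_mem_erase hj).symm
    _ = #(univ.erase i) * p ^ 2 := by rw [sum_const, nsmul_eq_mul]
    _ ≤ Fintype.card ι * p ^ 2 := by
        gcongr
        exact card_erase_le

end BoundedInPairs

lemma Real.min_le_sqrt_mul {a b : ℝ} (ha : 0 ≤ a) (hb : 0 ≤ b) : min a b ≤ √(a * b) :=
  Real.le_sqrt_of_sq_le <|
    (pow_two (min a b)).trans_le (mul_le_mul (min_le_left a b) (min_le_right a b) (le_min ha hb) ha)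

lemma one_div_sqrt_add_one_le {x : ℝ} (hx : 0 ≤ x) :
    1 / √(x + 1) ≤ 2 * (√(x + 1) - √x) := by
  have hpos : 0 < √(x + 1) := Real.sqrt_pos.mpr (by linarith)
  have hmono : √x ≤ √(x + 1) := Real.sqrt_le_sqrt (by linarith)
  rw [div_le_iff₀ hpos]
  nlinarith [Real.mul_self_sqrt hx, Real.mul_self_sqrt (by linarith : 0 ≤ x + 1), Real.sqrt_nonneg x]

lemma sum_range_one_div_sqrt_add_one_le (n : ℕ) :
    ∑ j ∈ range n, 1 / √((j : ℝ) + 1) ≤ 2 * √n := by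
  calc ∑ j ∈ range n, 1 / √((j : ℝ) + 1)
      ≤ ∑ j ∈ range n, 2 * (√(((j + 1 : ℕ) : ℝ)) - √(j : ℝ)) :=
        sum_le_sum fun j _ => by push_cast; exact one_div_sqrt_add_one_le j.cast_nonneg
    _ = 2 * √n := by
        rw [← mul_sum, sum_range_sub (fun j : ℕ => √(j : ℝ))]
        simp

lemma sum_one_div_sqrt_rank_le {n : ℕ} {k : Fin n → Fin n} (hk : Function.Bijective k) :
    ∑ i, 1 / √(((k i : ℕ) : ℝ) + 1) ≤ 2 * √n := by
  rw [Fintype.sum_bijective k hk _ (fun i : Fin n => 1 / √(((i : ℕ) : ℝ) + 1)) fun _ => rfl,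
    Fin.sum_univ_eq_sum_range (fun j => 1 / √((j : ℝ) + 1))]
  exact sum_range_one_div_sqrt_add_one_le n

lemma Real.sqrt_mul_pow_three_eq_mul_rpow {m p : ℝ} (hm : 0 ≤ m) (hp : 0 ≤ p) :
    √(m * p ^ 3) = √m * p ^ (3 / 2 : ℝ) := by
  rw [Real.sqrt_mul hm, Real.sqrt_eq_rpow (p ^ 3), ← Real.rpow_natCast p 3, ← Real.rpow_mul hp]
  norm_num

/-- The key counting step in the derandomized Kane–Williams restriction lemma.
There is a universal constant `C` such that the following holds. Let `y` be a
distribution over `{0,1}^m` that is `p`-bounded in pairs (each coordinate is `1`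
with probability at most `p`, and each pair of distinct coordinates is
simultaneously `1` with probability at most `p²`), and let `k : Fin m → Fin m` be
a ranking (distinct indices, i.e. a bijection; `k i` is 0-indexed, so the paper's
`k_i ∈ [m]` is `(k i) + 1`). Then for every `i`,
`Pr[y_i = 1 ∧ ∑_j y_j ≥ 2] ≤ min{p, m·p²} ≤ √(m·p³)`, and consequently
`∑_i (1/√(k_i)) · Pr[y_i = 1 ∧ ∑_j y_j ≥ 2] ≤ C·m·p^{3/2}`. -/
theorem kane_williams_counting :
    ∃ C : ℝ, 0 < C ∧
      ∀ (m : ℕ) (p : ℝ) (y : PMF (Fin m → Bool)) (k : Fin m → Fin m),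
        0 ≤ p → Function.Bijective k →
        (∀ i, pr y (fun v => v i = true) ≤ p) →
        (∀ i j, i ≠ j → pr y (fun v => v i = true ∧ v j = true) ≤ p ^ 2) →
        ((∀ i, pr y (fun v => v i = true ∧
              2 ≤ (univ.filter (fun j => v j = true)).card)
            ≤ min p ((m : ℝ) * p ^ 2)) ∧
          min p ((m : ℝ) * p ^ 2) ≤ Real.sqrt ((m : ℝ) * p ^ 3) ∧
          ∑ i, (1 / Real.sqrt (((k i : ℕ) : ℝ) + 1)) *
              pr y (fun v => v i = true ∧
                2 ≤ (univ.filter (fun j => v j = true)).card)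
            ≤ C * m * p ^ (3 / 2 : ℝ)) := by
  refine ⟨2, two_pos, fun m p y k hp hk h₁ h₂ => ?_⟩
  have hbound := pr_coord_and_two_le_card_le_min y h₁ h₂
  rw [Fintype.card_fin] at hbound
  have hmin : min p ((m : ℝ) * p ^ 2) ≤ √((m : ℝ) * p ^ 3) := by
    refine (Real.min_le_sqrt_mul hp (by positivity)).trans_eq (congrArg Real.sqrt ?_)
    ring
  refine ⟨hbound, hmin, ?_⟩
  rw [Real.sqrt_mul_pow_three_eq_mul_rpow m.cast_nonneg hp] at hmin
  calc _ ≤ ∑ i, 1 / √(((k i : ℕ) : ℝ) + 1) * (√m * p ^ (3 / 2 : ℝ)) :=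
        sum_le_sum fun i _ => by gcongr; exact (hbound i).trans hmin
    _ ≤ 2 * √m * (√m * p ^ (3 / 2 : ℝ)) := by
        rw [← sum_mul]
        gcongr
        exact sum_one_div_sqrt_rank_le hk
    _ = 2 * m * p ^ (3 / 2 : ℝ) := by
        linear_combination (2 * p ^ (3 / 2 : ℝ)) * Real.mul_self_sqrt (m.cast_nonneg : (0 : ℝ) ≤ m)

end
end
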